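/- Suppose Γ₂ᵛ(f) ≥ −K₁‖∇ᵛf‖² + κ⟨∇ᵛf,∇ʰf⟩, Γ₂^{v,h}(f) ≤ S₁ + (κ/2)(M‖∇ᵛf‖² − ‖∇ʰf‖²), with appropriate quadratic remainder terms controlled by Young's inequality. Then there exist a, b, c, d > 0 with b² < ac and a real constant K such that aΓ₂ᵛ(f) − 2bΓ₂^{v,h}(f) + cΓ₂^h(f) + dΓ₂^ξ(f) ≥ −K‖∇ᵛf‖² + ‖∇ʰf‖². (Abstract finite-dimensional version: given the four quadratic lower/upper bounds of Proposition 1 in terms of Hessian and gradient norms with bounded curvature constant M, the stated positive linear combination exists.) -/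

import Mathlib

/-!
Take `a = b² + 1`, `c = n`, `d = 1` and `b κ = 2 + σ² n²`. After every pairing is replaced
by its worst case under Cauchy–Schwarz, the Hessian terms form the quadratic form
`Hv² + (b Hv - Hvh)² + (n - 1)(Gξ - Hvh)² + ½(Hvξ - 2b Gv)² + ½(Hvξ - 2n Gh)²`,
up to the error `-σ²(b² Gv² + n² Gh²)`. The choice of `b` makes the term `b κ Gh²` coming
from `Γ₂^{v,h}` beat that error by `2 Gh²`, and Young's inequality spends one `Gh²` on all
`Gv Gh` cross terms at the price of a multiple of `Gv²`, which `K` absorbs.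
-/

noncomputable section

-- The formulas of Lemma 1, with the pairings (`P…`) and curvature terms (`R…`, `Q`) as free
-- variables.
def Γ₂v (σ κ n Hv Gv Pgvh : ℝ) : ℝ :=
  σ ^ 2 / 2 * (Hv ^ 2 + (n - 2) * Gv ^ 2) + κ * Pgvh

def Γ₂vh (σ κ n Gh Phh Pgvh Pξv Rvv : ℝ) : ℝ :=
  σ ^ 2 / 2 * (Phh + (n - 1) / 2 * Pgvh - Pξv) + κ / 2 * (Rvv - Gh ^ 2)

def Γ₂h (σ κ Hvh Gh Pξh Rvh : ℝ) : ℝ :=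
  σ ^ 2 / 2 * (Hvh ^ 2 + Gh ^ 2 - 2 * Pξh) + κ * Rvh

def Γ₂ξ (σ n Hvξ Gξ Q : ℝ) : ℝ :=
  σ ^ 2 / 2 * (Hvξ ^ 2 + (n - 1) * Gξ ^ 2 + 2 * Q)

end

lemma neg_abs_mul_le_mul_of_abs_le {P B : ℝ} (c : ℝ) (h : |P| ≤ B) : -(|c| * B) ≤ c * P := by
  calc -(|c| * B) ≤ -(|c| * |P|) := neg_le_neg (mul_le_mul_of_nonneg_left h (abs_nonneg c))
    _ = -|c * P| := by rw [abs_mul]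
    _ ≤ c * P := neg_abs_le _

lemma hessian_quadratic_form_lower_bound (b : ℝ) {n : ℝ} (hn : 1 ≤ n)
    (Hv Hvh Hvξ Gv Gh Gξ : ℝ) :
    -2 * (b ^ 2 * Gv ^ 2 + n ^ 2 * Gh ^ 2) ≤
      (b ^ 2 + 1) * Hv ^ 2 - 2 * b * Hv * Hvh + n * Hvh ^ 2 + Hvξ ^ 2
        + (n - 1) * (Gξ ^ 2 - 2 * Hvh * Gξ) - 2 * Hvξ * (b * Gv + n * Gh) := by
  have hξ : 0 ≤ (n - 1) * (Gξ - Hvh) ^ 2 := mul_nonneg (by linarith) (sq_nonneg _)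
  linarith [sq_nonneg Hv, sq_nonneg (b * Hv - Hvh), sq_nonneg (Hvξ - 2 * b * Gv),
    sq_nonneg (Hvξ - 2 * n * Gh)]

section

variable {σ κ n M b Hv Hvh Hvξ Gv Gh Gξ Pgvh Phh Pξv Pξh Rvv Rvh Q : ℝ}

lemma bakryEmery_combination_lower_bound (hb : 0 ≤ b) (hκ : 0 ≤ κ) (hn : 2 ≤ n)
    (hbκ : 2 + σ ^ 2 * n ^ 2 ≤ b * κ)
    (hPgvh : |Pgvh| ≤ Gv * Gh) (hPhh : |Phh| ≤ Hv * Hvh) (hPξv : |Pξv| ≤ Hvξ * Gv)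
    (hPξh : |Pξh| ≤ Hvξ * Gh) (hRvv : |Rvv| ≤ M * Gv ^ 2) (hRvh : |Rvh| ≤ M * Gv * Gh)
    (hQ : |Q| ≤ (n - 1) * Hvh * Gξ) :
    -(b * κ * M + σ ^ 2 * b ^ 2
        + (|(b ^ 2 + 1) * κ - b * σ ^ 2 * (n - 1) / 2| + n * κ * M) ^ 2 / 4) * Gv ^ 2
        + Gh ^ 2 ≤
      (b ^ 2 + 1) * Γ₂v σ κ n Hv Gv Pgvh - 2 * b * Γ₂vh σ κ n Gh Phh Pgvh Pξv Rvv
        + n * Γ₂h σ κ Hvh Gh Pξh Rvh + Γ₂ξ σ n Hvξ Gξ Q := by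
  unfold Γ₂v Γ₂vh Γ₂h Γ₂ξ
  have hs : 0 ≤ σ ^ 2 := sq_nonneg σ
  have hbs : 0 ≤ b * σ ^ 2 := mul_nonneg hb hs
  have hns : 0 ≤ n * σ ^ 2 := mul_nonneg (by linarith) hs
  have hnκ : 0 ≤ n * κ := mul_nonneg (by linarith) hκ
  have hbκ_nonneg : 0 ≤ b * κ := (by positivity : (0 : ℝ) ≤ 2 + σ ^ 2 * n ^ 2).trans hbκ
  have fPgvh := neg_abs_mul_le_mul_of_abs_le ((b ^ 2 + 1) * κ - b * σ ^ 2 * (n - 1) / 2) hPgvh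
  have fPhh := mul_le_mul_of_nonneg_left (abs_le.mp hPhh).2 hbs
  have fPξv := mul_le_mul_of_nonneg_left (abs_le.mp hPξv).1 hbs
  have fPξh := mul_le_mul_of_nonneg_left (abs_le.mp hPξh).2 hns
  have fRvv := mul_le_mul_of_nonneg_left (abs_le.mp hRvv).2 hbκ_nonneg
  have fRvh := mul_le_mul_of_nonneg_left (abs_le.mp hRvh).1 hnκ
  have fQ := mul_le_mul_of_nonneg_left (abs_le.mp hQ).1 hs
  have hHess := mul_le_mul_of_nonneg_left
    (hessian_quadratic_form_lower_bound b (by linarith : (1 : ℝ) ≤ n) Hv Hvh Hvξ Gv Gh Gξ)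
    (by positivity : (0 : ℝ) ≤ σ ^ 2 / 2)
  have young := sq_nonneg
    (Gh - (|(b ^ 2 + 1) * κ - b * σ ^ 2 * (n - 1) / 2| + n * κ * M) / 2 * Gv)
  have hGv_sq : 0 ≤ (b ^ 2 + 1) * σ ^ 2 * (n - 2) * Gv ^ 2 := by
    have : 0 ≤ n - 2 := by linarith
    positivity
  have hGh_sq : 0 ≤ n * σ ^ 2 * Gh ^ 2 := mul_nonneg hns (sq_nonneg Gh)
  have hGh_gain := mul_le_mul_of_nonneg_right hbκ (sq_nonneg Gh)
  linarith

end

theorem generalized_bakry_emery_combination_general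
    (σ κ : ℝ) (hκ : 0 < κ)
    (n : ℕ) (hn : 2 ≤ n) (M : ℝ) :
    ∃ a b c d : ℝ, 0 < a ∧ 0 < b ∧ 0 < c ∧ 0 < d ∧ b ^ 2 < a * c ∧
      ∃ K : ℝ,
        ∀ Hv Hvh Hvξ Gv Gh Gξ Pgvh Phh Pξv Pξh Rvv Rvh Q : ℝ,
          0 ≤ Hv → 0 ≤ Hvh → 0 ≤ Hvξ → 0 ≤ Gv → 0 ≤ Gh → 0 ≤ Gξ →
          |Pgvh| ≤ Gv * Gh → |Phh| ≤ Hv * Hvh → |Pξv| ≤ Hvξ * Gv →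
          |Pξh| ≤ Hvξ * Gh → |Rvv| ≤ M * Gv ^ 2 → |Rvh| ≤ M * Gv * Gh →
          |Q| ≤ (n - 1 : ℝ) * Hvh * Gξ →
          -K * Gv ^ 2 + Gh ^ 2 ≤
            a * (σ ^ 2 / 2 * (Hv ^ 2 + ((n : ℝ) - 2) * Gv ^ 2) + κ * Pgvh)
            - 2 * b * (σ ^ 2 / 2 * (Phh + ((n : ℝ) - 1) / 2 * Pgvh - Pξv)
                + κ / 2 * (Rvv - Gh ^ 2))
            + c * (σ ^ 2 / 2 * (Hvh ^ 2 + Gh ^ 2 - 2 * Pξh) + κ * Rvh)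
            + d * (σ ^ 2 / 2 * (Hvξ ^ 2 + ((n : ℝ) - 1) * Gξ ^ 2 + 2 * Q)) := by
  have hn' : (2 : ℝ) ≤ n := by exact_mod_cast hn
  set b := (2 + σ ^ 2 * n ^ 2) / κ
  have hbκ : b * κ = 2 + σ ^ 2 * n ^ 2 := div_mul_cancel₀ _ hκ.ne'
  have hb : 0 < b := by positivity
  refine ⟨b ^ 2 + 1, b, n, 1, by positivity, hb, by positivity, one_pos, by nlinarith, ?_⟩
  exact ⟨_, fun _ _ _ _ _ _ _ _ _ _ _ _ _ _ _ _ _ _ _ hPgvh hPhh hPξv hPξh hRvv hRvh hQ => by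
    rw [one_mul]
    exact bakryEmery_combination_lower_bound hb.le hκ.le hn' hbκ.ge
      hPgvh hPhh hPξv hPξh hRvv hRvh hQ⟩

/-- abstract version of Proposition 1: given the explicit formulas of
Lemma 1 for `Γ₂ᵛ, Γ₂^{v,h}, Γ₂^h, Γ₂^ξ` in terms of Hessian/gradient norms, pairings
controlled by Cauchy–Schwarz and curvature terms bounded by `M`, there exist
`a,b,c,d > 0` with `b² < ac` and `K ∈ ℝ` such that
`aΓ₂ᵛ − 2bΓ₂^{v,h} + cΓ₂^h + dΓ₂^ξ ≥ −K‖∇ᵛf‖² + ‖∇ʰf‖²`. -/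
theorem generalized_bakry_emery_combination
    (σ κ : ℝ) (hσ : 0 < σ) (hκ : 0 < κ)
    (n : ℕ) (hn : 2 ≤ n) (M : ℝ) (hM : 0 ≤ M) :
    ∃ a b c d : ℝ, 0 < a ∧ 0 < b ∧ 0 < c ∧ 0 < d ∧ b ^ 2 < a * c ∧
      ∃ K : ℝ,
        ∀ Hv Hvh Hvξ Gv Gh Gξ Pgvh Phh Pξv Pξh Rvv Rvh Q : ℝ,
          0 ≤ Hv → 0 ≤ Hvh → 0 ≤ Hvξ → 0 ≤ Gv → 0 ≤ Gh → 0 ≤ Gξ →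
          |Pgvh| ≤ Gv * Gh → |Phh| ≤ Hv * Hvh → |Pξv| ≤ Hvξ * Gv →
          |Pξh| ≤ Hvξ * Gh → |Rvv| ≤ M * Gv ^ 2 → |Rvh| ≤ M * Gv * Gh →
          |Q| ≤ (n - 1 : ℝ) * Hvh * Gξ →
          -K * Gv ^ 2 + Gh ^ 2 ≤
            a * (σ ^ 2 / 2 * (Hv ^ 2 + ((n : ℝ) - 2) * Gv ^ 2) + κ * Pgvh)
            - 2 * b * (σ ^ 2 / 2 * (Phh + ((n : ℝ) - 1) / 2 * Pgvh - Pξv)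
                + κ / 2 * (Rvv - Gh ^ 2))
            + c * (σ ^ 2 / 2 * (Hvh ^ 2 + Gh ^ 2 - 2 * Pξh) + κ * Rvh)
            + d * (σ ^ 2 / 2 * (Hvξ ^ 2 + ((n : ℝ) - 1) * Gξ ^ 2 + 2 * Q)) :=
  generalized_bakry_emery_combination_general σ κ hκ n hn M
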